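/- Let R₃ = {a₀, a₁, a₂} be the dihedral quandle of order 3 and consider the integral quandle ring ℤ[R₃]. Set e₁ = a₁ − a₀ and e₂ = a₂ − a₀, and define Δ¹ = Δ(R₃) and, for k ≥ 1, Δ^{k+1} = the additive subgroup of ℤ[R₃] generated by all products u·v with (u ∈ Δ^k and v ∈ Δ(R₃)) or (u ∈ Δ(R₃) and v ∈ Δ^k). Then for every natural number k ≥ 1: Δ^{2k−1}(R₃) is the additive subgroup generated by {3^{k−1}e₁, 3^{k−1}e₂}, Δ^{2k}(R₃) is the additive subgroup generated by {3^{k−1}(e₁ + e₂), 3^k e₂}, and the quotient abelian group Δ^k(R₃)/Δ^{k+1}(R₃) is isomorphic to ℤ/3ℤ. -/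

import Mathlib

/-!
Statement 15: For the dihedral quandle `R₃ = ZMod 3` (with `aᵢ·aⱼ = a_{2j−i}`) and its
integral quandle ring `ℤ[R₃]`, with `e₁ = a₁ − a₀`, `e₂ = a₂ − a₀`, and the powers
`Δ¹ = Δ(R₃)`, `Δ^{k+1} = ⟨u·v | (u ∈ Δ^k, v ∈ Δ) or (u ∈ Δ, v ∈ Δ^k)⟩`:
for all `k ≥ 1`,
`Δ^{2k−1}(R₃) = ⟨3^{k−1}e₁, 3^{k−1}e₂⟩`, `Δ^{2k}(R₃) = ⟨3^{k−1}(e₁+e₂), 3^k e₂⟩`, and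
`Δ^k(R₃)/Δ^{k+1}(R₃) ≅ ℤ/3ℤ`.

Here `dPow op j` denotes `Δ^{j+1}`, so the claims are stated for all `j = k − 1 ≥ 0`.
-/

variable {X : Type*}

/-- Multiplication on the free module `X →₀ ℤ` induced by a binary operation on `X`. -/
noncomputable def qmul (op : X → X → X) (u v : X →₀ ℤ) : X →₀ ℤ :=
  u.sum fun x a => v.sum fun y b => Finsupp.single (op x y) (a * b)

/-- The augmentation homomorphism `ℤ[X] → ℤ`. -/
noncomputable def augHom : (X →₀ ℤ) →+ ℤ :=
  Finsupp.liftAddHom fun _ => AddMonoidHom.id ℤ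

/-- The augmentation ideal `Δ(X)` of `ℤ[X]`, as an additive subgroup. -/
noncomputable def augKer (X : Type*) : AddSubgroup (X →₀ ℤ) := augHom.ker

/-- `dPow op j = Δ^{j+1}(X)`: `dPow op 0 = Δ(X)` and `Δ^{k+1}` is the additive subgroup
generated by products `u·v` with `u ∈ Δ^k, v ∈ Δ` or `u ∈ Δ, v ∈ Δ^k`. -/
noncomputable def dPow (op : X → X → X) : ℕ → AddSubgroup (X →₀ ℤ)
  | 0 => augKer X
  | k + 1 => AddSubgroup.closure
      {w | ∃ u v : X →₀ ℤ, w = qmul op u v ∧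
        ((u ∈ dPow op k ∧ v ∈ augKer X) ∨ (u ∈ augKer X ∧ v ∈ dPow op k))}

/-- The dihedral quandle operation on `ZMod n`: `aᵢ·aⱼ = a_{2j−i}`. -/
def dihedralOp (n : ℕ) : ZMod n → ZMod n → ZMod n := fun a b => 2 * b - a

variable (op : X → X → X)

lemma qmul_single_single (x y : X) (a b : ℤ) :
    qmul op (Finsupp.single x a) (Finsupp.single y b)
      = Finsupp.single (op x y) (a * b) := by
  unfold qmul
  rw [Finsupp.sum_single_index (by simp), Finsupp.sum_single_index (by simp)]

lemma qmul_zero_left (v : X →₀ ℤ) : qmul op 0 v = 0 := by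
  unfold qmul; simp

lemma qmul_zero_right (u : X →₀ ℤ) : qmul op u 0 = 0 := by
  unfold qmul; simp

lemma qmul_add_left (u u' v : X →₀ ℤ) :
    qmul op (u + u') v = qmul op u v + qmul op u' v := by
  unfold qmul
  rw [Finsupp.sum_add_index' (by simp) ?_]
  intro x a a'
  rw [← Finsupp.sum_add]
  congr 1; ext y b
  rw [add_mul, Finsupp.single_add]

lemma qmul_add_right (u v v' : X →₀ ℤ) :
    qmul op u (v + v') = qmul op u v + qmul op u v' := by
  unfold qmul
  rw [← Finsupp.sum_add]
  congr 1; ext x a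
  rw [Finsupp.sum_add_index' (by simp) (by intro y b b'; rw [mul_add, Finsupp.single_add])]

lemma qmul_neg_left (u v : X →₀ ℤ) : qmul op (-u) v = -qmul op u v := by
  have h := qmul_add_left op u (-u) v
  rw [add_neg_cancel, qmul_zero_left] at h
  exact (neg_eq_of_add_eq_zero_right h.symm).symm

lemma qmul_neg_right (u v : X →₀ ℤ) : qmul op u (-v) = -qmul op u v := by
  have h := qmul_add_right op u v (-v)
  rw [add_neg_cancel, qmul_zero_right] at h
  exact (neg_eq_of_add_eq_zero_right h.symm).symm

lemma qmul_sub_left (u u' v : X →₀ ℤ) :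
    qmul op (u - u') v = qmul op u v - qmul op u' v := by
  rw [sub_eq_add_neg, qmul_add_left, qmul_neg_left, sub_eq_add_neg]

lemma qmul_sub_right (u v v' : X →₀ ℤ) :
    qmul op u (v - v') = qmul op u v - qmul op u v' := by
  rw [sub_eq_add_neg, qmul_add_right, qmul_neg_right, sub_eq_add_neg]

lemma qmul_smul_left (c : ℤ) (u v : X →₀ ℤ) :
    qmul op (c • u) v = c • qmul op u v := by
  induction c using Int.induction_on with
  | zero => simp [qmul_zero_left]
  | succ n ih => rw [add_smul, one_smul, qmul_add_left, ih, add_smul, one_smul]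
  | pred n ih =>
      rw [sub_smul, one_smul, qmul_sub_left, ih, sub_smul, one_smul]

lemma qmul_smul_right (c : ℤ) (u v : X →₀ ℤ) :
    qmul op u (c • v) = c • qmul op u v := by
  induction c using Int.induction_on with
  | zero => simp [qmul_zero_right]
  | succ n ih => rw [add_smul, one_smul, qmul_add_right, ih, add_smul, one_smul]
  | pred n ih =>
      rw [sub_smul, one_smul, qmul_sub_right, ih, sub_smul, one_smul]

open AddSubgroup in
lemma qmul_mem_closure {A B : Set (X →₀ ℤ)} {u v : X →₀ ℤ}
    (hu : u ∈ closure A) (hv : v ∈ closure B) :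
    qmul op u v ∈ closure {w | ∃ a ∈ A, ∃ b ∈ B, w = qmul op a b} := by
  set C := closure {w | ∃ a ∈ A, ∃ b ∈ B, w = qmul op a b} with hC
  induction hu using closure_induction with
  | mem a ha =>
      induction hv using closure_induction with
      | mem b hb => exact subset_closure ⟨a, ha, b, hb, rfl⟩
      | zero => rw [qmul_zero_right]; exact zero_mem C
      | add x y hx hy ihx ihy => rw [qmul_add_right]; exact add_mem ihx ihy
      | neg x hx ihx => rw [qmul_neg_right]; exact neg_mem ihx
  | zero => rw [qmul_zero_left]; exact zero_mem C
  | add x y hx hy ihx ihy => rw [qmul_add_left]; exact add_mem ihx ihy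
  | neg x hx ihx => rw [qmul_neg_left]; exact neg_mem ihx


open AddSubgroup in
lemma mem_pair_combo {A : Type*} [AddCommGroup A] (x y : A) (a b : ℤ) :
    a • x + b • y ∈ closure ({x, y} : Set A) := by
  have hx : x ∈ closure ({x, y} : Set A) := subset_closure (Set.mem_insert _ _)
  have hy : y ∈ closure ({x, y} : Set A) := subset_closure (Set.mem_insert_of_mem _ rfl)
  exact add_mem (AddSubgroup.zsmul_mem _ hx a) (AddSubgroup.zsmul_mem _ hy b)

lemma dPow_zero : dPow op 0 = augKer X := rfl

lemma dPow_succ_def (k : ℕ) :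
    dPow op (k + 1) = AddSubgroup.closure
      {w | ∃ u v : X →₀ ℤ, w = qmul op u v ∧
        ((u ∈ dPow op k ∧ v ∈ augKer X) ∨ (u ∈ augKer X ∧ v ∈ dPow op k))} := rfl

open AddSubgroup in
lemma dPow_step {k : ℕ} {g₁ g₂ f₁ f₂ : X →₀ ℤ}
    (hk : dPow op k = closure {g₁, g₂}) (hΔ : augKer X = closure {f₁, f₂}) :
    dPow op (k + 1) = closure {qmul op g₁ f₁, qmul op g₁ f₂, qmul op g₂ f₁, qmul op g₂ f₂,
      qmul op f₁ g₁, qmul op f₁ g₂, qmul op f₂ g₁, qmul op f₂ g₂} := by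
  rw [dPow_succ_def]
  apply le_antisymm
  · refine (closure_le _).2 ?_
    rintro w ⟨u, v, rfl, ⟨hu, hv⟩ | ⟨hu, hv⟩⟩
    · rw [hk] at hu; rw [hΔ] at hv
      refine closure_mono ?_ (qmul_mem_closure op hu hv)
      rintro w ⟨a, (rfl : a = g₁) | (rfl : a = g₂), b, (rfl : b = f₁) | (rfl : b = f₂), rfl⟩ <;>
        simp
    · rw [hΔ] at hu; rw [hk] at hv
      refine closure_mono ?_ (qmul_mem_closure op hu hv)
      rintro w ⟨a, (rfl : a = f₁) | (rfl : a = f₂), b, (rfl : b = g₁) | (rfl : b = g₂), rfl⟩ <;>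
        simp
  · refine (closure_le _).2 ?_
    have hg₁ : g₁ ∈ dPow op k := hk ▸ subset_closure (Set.mem_insert _ _)
    have hg₂ : g₂ ∈ dPow op k := hk ▸ subset_closure (Set.mem_insert_of_mem _ rfl)
    have hf₁ : f₁ ∈ augKer X := hΔ ▸ subset_closure (Set.mem_insert _ _)
    have hf₂ : f₂ ∈ augKer X := hΔ ▸ subset_closure (Set.mem_insert_of_mem _ rfl)
    rintro w (rfl | rfl | rfl | rfl | rfl | rfl | rfl | rfl) <;>
      exact subset_closure ⟨_, _, rfl, by tauto⟩


noncomputable def E₁ : ZMod 3 →₀ ℤ := Finsupp.single 1 1 - Finsupp.single 0 1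
noncomputable def E₂ : ZMod 3 →₀ ℤ := Finsupp.single 2 1 - Finsupp.single 0 1

@[simp] lemma augHom_single {X : Type*} (x : X) (a : ℤ) :
    augHom (Finsupp.single x a) = a := by
  simp [augHom]

@[simp] lemma E1_0 : E₁ 0 = -1 := by
  rw [E₁, Finsupp.sub_apply, Finsupp.single_eq_of_ne (by decide), Finsupp.single_eq_same]; ring
@[simp] lemma E1_1 : E₁ 1 = 1 := by
  rw [E₁, Finsupp.sub_apply, Finsupp.single_eq_same, Finsupp.single_eq_of_ne (by decide)]; ring
@[simp] lemma E1_2 : E₁ 2 = 0 := by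
  rw [E₁, Finsupp.sub_apply, Finsupp.single_eq_of_ne (by decide),
    Finsupp.single_eq_of_ne (by decide)]; ring
@[simp] lemma E2_0 : E₂ 0 = -1 := by
  rw [E₂, Finsupp.sub_apply, Finsupp.single_eq_of_ne (by decide), Finsupp.single_eq_same]; ring
@[simp] lemma E2_1 : E₂ 1 = 0 := by
  rw [E₂, Finsupp.sub_apply, Finsupp.single_eq_of_ne (by decide),
    Finsupp.single_eq_of_ne (by decide)]; ring
@[simp] lemma E2_2 : E₂ 2 = 1 := by
  rw [E₂, Finsupp.sub_apply, Finsupp.single_eq_same, Finsupp.single_eq_of_ne (by decide)]; ring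

lemma repr_aug (u : ZMod 3 →₀ ℤ) (hu : u ∈ augKer (ZMod 3)) :
    u = u 1 • E₁ + u 2 • E₂ := by
  have h : u 0 + u 1 + u 2 = 0 := by
    have h0 : augHom u = 0 := hu
    rw [show (augHom u : ℤ) = u.sum fun _ a => a from rfl,
      Finsupp.sum_fintype _ _ (fun _ => rfl)] at h0
    rw [show (Finset.univ.sum fun i => u i) = u 0 + u 1 + u 2 from Fin.sum_univ_three u] at h0
    exact h0
  ext a
  rw [Finsupp.add_apply, Finsupp.smul_apply, Finsupp.smul_apply]
  rcases (show a = 0 ∨ a = 1 ∨ a = 2 by revert a; decide) with rfl | rfl | rfl <;> simp <;> omega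
open AddSubgroup in
lemma augKer_eq : augKer (ZMod 3) = closure {E₁, E₂} := by
  apply le_antisymm
  · intro u hu
    rw [repr_aug u hu]
    exact mem_pair_combo E₁ E₂ _ _
  · refine (closure_le _).2 ?_
    rintro w (rfl | rfl) <;>
      · show augHom _ = 0
        simp [E₁, E₂, map_sub]

lemma dvals :
    dihedralOp 3 0 0 = 0 ∧ dihedralOp 3 0 1 = 2 ∧ dihedralOp 3 0 2 = 1 ∧
    dihedralOp 3 1 0 = 2 ∧ dihedralOp 3 1 1 = 1 ∧ dihedralOp 3 1 2 = 0 ∧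
    dihedralOp 3 2 0 = 1 ∧ dihedralOp 3 2 1 = 0 ∧ dihedralOp 3 2 2 = 2 := by
  refine ⟨?_, ?_, ?_, ?_, ?_, ?_, ?_, ?_, ?_⟩ <;> decide

lemma t11 : qmul (dihedralOp 3) E₁ E₁ = E₁ - 2 • E₂ := by
  obtain ⟨h1, h2, h3, h4, h5, h6, h7, h8, h9⟩ := dvals
  simp only [E₁, E₂, qmul_sub_left, qmul_sub_right, qmul_single_single, mul_one,
    h1, h2, h3, h4, h5, h6, h7, h8, h9]
  abel

lemma t12 : qmul (dihedralOp 3) E₁ E₂ = -(E₁ + E₂) := by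
  obtain ⟨h1, h2, h3, h4, h5, h6, h7, h8, h9⟩ := dvals
  simp only [E₁, E₂, qmul_sub_left, qmul_sub_right, qmul_single_single, mul_one,
    h1, h2, h3, h4, h5, h6, h7, h8, h9]
  abel

lemma t21 : qmul (dihedralOp 3) E₂ E₁ = -(E₁ + E₂) := by
  obtain ⟨h1, h2, h3, h4, h5, h6, h7, h8, h9⟩ := dvals
  simp only [E₁, E₂, qmul_sub_left, qmul_sub_right, qmul_single_single, mul_one,
    h1, h2, h3, h4, h5, h6, h7, h8, h9]
  abel

lemma t22 : qmul (dihedralOp 3) E₂ E₂ = E₂ - 2 • E₁ := by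
  obtain ⟨h1, h2, h3, h4, h5, h6, h7, h8, h9⟩ := dvals
  simp only [E₁, E₂, qmul_sub_left, qmul_sub_right, qmul_single_single, mul_one,
    h1, h2, h3, h4, h5, h6, h7, h8, h9]
  abel

open AddSubgroup in
lemma mem_pair_of_eq {A : Type*} [AddCommGroup A] {x y z : A} (a b : ℤ)
    (h : z = a • x + b • y) : z ∈ closure ({x, y} : Set A) :=
  h ▸ mem_pair_combo x y a b

open AddSubgroup in
lemma mem_clo_combo {A : Type*} [AddCommGroup A] {S : Set A} {s t z : A}
    (hs : s ∈ S) (ht : t ∈ S) (a b : ℤ) (h : z = a • s + b • t) : z ∈ closure S := by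
  rw [h]
  exact add_mem (AddSubgroup.zsmul_mem _ (subset_closure hs) a)
    (AddSubgroup.zsmul_mem _ (subset_closure ht) b)

open AddSubgroup in
lemma even_step (c : ℤ) :
    closure {qmul (dihedralOp 3) (c • E₁) E₁, qmul (dihedralOp 3) (c • E₁) E₂,
      qmul (dihedralOp 3) (c • E₂) E₁, qmul (dihedralOp 3) (c • E₂) E₂,
      qmul (dihedralOp 3) E₁ (c • E₁), qmul (dihedralOp 3) E₁ (c • E₂),
      qmul (dihedralOp 3) E₂ (c • E₁), qmul (dihedralOp 3) E₂ (c • E₂)}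
      = closure {c • (E₁ + E₂), (3 * c) • E₂} := by
  have e1 : qmul (dihedralOp 3) (c • E₁) E₁ = c • (E₁ - 2 • E₂) := by rw [qmul_smul_left, t11]
  have e2 : qmul (dihedralOp 3) (c • E₁) E₂ = c • -(E₁ + E₂) := by rw [qmul_smul_left, t12]
  have e3 : qmul (dihedralOp 3) (c • E₂) E₁ = c • -(E₁ + E₂) := by rw [qmul_smul_left, t21]
  have e4 : qmul (dihedralOp 3) (c • E₂) E₂ = c • (E₂ - 2 • E₁) := by rw [qmul_smul_left, t22]
  have e5 : qmul (dihedralOp 3) E₁ (c • E₁) = c • (E₁ - 2 • E₂) := by rw [qmul_smul_right, t11]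
  have e6 : qmul (dihedralOp 3) E₁ (c • E₂) = c • -(E₁ + E₂) := by rw [qmul_smul_right, t12]
  have e7 : qmul (dihedralOp 3) E₂ (c • E₁) = c • -(E₁ + E₂) := by rw [qmul_smul_right, t21]
  have e8 : qmul (dihedralOp 3) E₂ (c • E₂) = c • (E₂ - 2 • E₁) := by rw [qmul_smul_right, t22]
  rw [e1, e2, e3, e4, e5, e6, e7, e8]
  apply le_antisymm <;> refine (closure_le _).2 ?_
  · rintro w (rfl | rfl | rfl | rfl | rfl | rfl | rfl | rfl)
    · exact mem_pair_of_eq 1 (-1) (by module)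
    · exact mem_pair_of_eq (-1) 0 (by module)
    · exact mem_pair_of_eq (-1) 0 (by module)
    · exact mem_pair_of_eq (-2) 1 (by module)
    · exact mem_pair_of_eq 1 (-1) (by module)
    · exact mem_pair_of_eq (-1) 0 (by module)
    · exact mem_pair_of_eq (-1) 0 (by module)
    · exact mem_pair_of_eq (-2) 1 (by module)
  · rintro w (rfl | rfl)
    · exact mem_clo_combo (s := c • -(E₁ + E₂)) (t := c • -(E₁ + E₂)) (by simp) (by simp)
        (-1) 0 (by module)
    · exact mem_clo_combo (s := c • (E₁ - 2 • E₂)) (t := c • -(E₁ + E₂)) (by simp) (by simp)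
        (-1) (-1) (by module)

open AddSubgroup in
lemma odd_step (c : ℤ) :
    closure {qmul (dihedralOp 3) (c • (E₁ + E₂)) E₁, qmul (dihedralOp 3) (c • (E₁ + E₂)) E₂,
      qmul (dihedralOp 3) ((3 * c) • E₂) E₁, qmul (dihedralOp 3) ((3 * c) • E₂) E₂,
      qmul (dihedralOp 3) E₁ (c • (E₁ + E₂)), qmul (dihedralOp 3) E₁ ((3 * c) • E₂),
      qmul (dihedralOp 3) E₂ (c • (E₁ + E₂)), qmul (dihedralOp 3) E₂ ((3 * c) • E₂)}
      = closure {(3 * c) • E₁, (3 * c) • E₂} := by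
  have e1 : qmul (dihedralOp 3) (c • (E₁ + E₂)) E₁ = c • ((E₁ - 2 • E₂) + -(E₁ + E₂)) := by
    rw [qmul_smul_left, qmul_add_left, t11, t21]
  have e2 : qmul (dihedralOp 3) (c • (E₁ + E₂)) E₂ = c • (-(E₁ + E₂) + (E₂ - 2 • E₁)) := by
    rw [qmul_smul_left, qmul_add_left, t12, t22]
  have e3 : qmul (dihedralOp 3) ((3 * c) • E₂) E₁ = (3 * c) • -(E₁ + E₂) := by
    rw [qmul_smul_left, t21]
  have e4 : qmul (dihedralOp 3) ((3 * c) • E₂) E₂ = (3 * c) • (E₂ - 2 • E₁) := by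
    rw [qmul_smul_left, t22]
  have e5 : qmul (dihedralOp 3) E₁ (c • (E₁ + E₂)) = c • ((E₁ - 2 • E₂) + -(E₁ + E₂)) := by
    rw [qmul_smul_right, qmul_add_right, t11, t12]
  have e6 : qmul (dihedralOp 3) E₁ ((3 * c) • E₂) = (3 * c) • -(E₁ + E₂) := by
    rw [qmul_smul_right, t12]
  have e7 : qmul (dihedralOp 3) E₂ (c • (E₁ + E₂)) = c • (-(E₁ + E₂) + (E₂ - 2 • E₁)) := by
    rw [qmul_smul_right, qmul_add_right, t21, t22]
  have e8 : qmul (dihedralOp 3) E₂ ((3 * c) • E₂) = (3 * c) • (E₂ - 2 • E₁) := by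
    rw [qmul_smul_right, t22]
  rw [e1, e2, e3, e4, e5, e6, e7, e8]
  apply le_antisymm <;> refine (closure_le _).2 ?_
  · rintro w (rfl | rfl | rfl | rfl | rfl | rfl | rfl | rfl)
    · exact mem_pair_of_eq 0 (-1) (by module)
    · exact mem_pair_of_eq (-1) 0 (by module)
    · exact mem_pair_of_eq (-1) (-1) (by module)
    · exact mem_pair_of_eq (-2) 1 (by module)
    · exact mem_pair_of_eq 0 (-1) (by module)
    · exact mem_pair_of_eq (-1) (-1) (by module)
    · exact mem_pair_of_eq (-1) 0 (by module)
    · exact mem_pair_of_eq (-2) 1 (by module)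
  · rintro w (rfl | rfl)
    · exact mem_clo_combo (s := c • (-(E₁ + E₂) + (E₂ - 2 • E₁)))
        (t := c • (-(E₁ + E₂) + (E₂ - 2 • E₁))) (by simp) (by simp) (-1) 0 (by module)
    · exact mem_clo_combo (s := c • ((E₁ - 2 • E₂) + -(E₁ + E₂)))
        (t := c • ((E₁ - 2 • E₂) + -(E₁ + E₂))) (by simp) (by simp) (-1) 0 (by module)

open AddSubgroup in
lemma PQ (j : ℕ) :
    dPow (dihedralOp 3) (2 * j) = closure {(3 : ℤ) ^ j • E₁, (3 : ℤ) ^ j • E₂} ∧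
    dPow (dihedralOp 3) (2 * j + 1)
      = closure {(3 : ℤ) ^ j • (E₁ + E₂), (3 * (3 : ℤ) ^ j) • E₂} := by
  induction j with
  | zero =>
      have h0 : dPow (dihedralOp 3) 0 = closure {E₁, E₂} := by
        rw [dPow_zero, augKer_eq]
      constructor
      · rw [show (2 * 0 : ℕ) = 0 from rfl, h0, pow_zero, one_smul, one_smul]
      · rw [show (2 * 0 + 1 : ℕ) = 0 + 1 from rfl, dPow_step _ h0 augKer_eq]
        have h := even_step 1
        simp only [one_smul] at h
        rw [h]; norm_num
  | succ j ih =>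
      have heven : dPow (dihedralOp 3) (2 * (j + 1))
          = closure {(3 : ℤ) ^ (j + 1) • E₁, (3 : ℤ) ^ (j + 1) • E₂} := by
        rw [show 2 * (j + 1) = (2 * j + 1) + 1 by ring,
          dPow_step _ ih.2 augKer_eq, odd_step ((3 : ℤ) ^ j), pow_succ, mul_comm]
      refine ⟨heven, ?_⟩
      rw [dPow_step _ heven augKer_eq, even_step ((3 : ℤ) ^ (j + 1))]

noncomputable def pairHom {A : Type*} [AddCommGroup A] (x y : A) : ℤ × ℤ →+ A :=
  AddMonoidHom.mk' (fun p => p.1 • x + p.2 • y) (by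
    intro p q
    simp only [Prod.fst_add, Prod.snd_add, add_smul]
    abel)

@[simp] lemma pairHom_apply {A : Type*} [AddCommGroup A] (x y : A) (p : ℤ × ℤ) :
    pairHom x y p = p.1 • x + p.2 • y := rfl

open AddSubgroup in
lemma pairHom_range {A : Type*} [AddCommGroup A] (x y : A) :
    (pairHom x y).range = closure {x, y} := by
  ext z
  rw [AddMonoidHom.mem_range, AddSubgroup.mem_closure_pair]
  constructor
  · rintro ⟨⟨m, n⟩, rfl⟩; exact ⟨m, n, rfl⟩
  · rintro ⟨m, n, rfl⟩; exact ⟨(m, n), rfl⟩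

open AddSubgroup in
lemma map_closure_pair {A B : Type*} [AddCommGroup A] [AddCommGroup B] (f : A →+ B)
    (x y : A) : (closure {x, y}).map f = closure {f x, f y} := by
  rw [AddMonoidHom.map_closure]
  congr 1
  simp [Set.image_insert_eq]

open AddSubgroup in
lemma quot_transfer {A P : Type*} [AddCommGroup A] [AddCommGroup P] (f : P →+ A)
    (hf : Function.Injective f) (K : AddSubgroup P) :
    Nonempty ((↥f.range ⧸ (K.map f).addSubgroupOf f.range) ≃+ (P ⧸ K)) := by
  have he : K.map (AddMonoidHom.ofInjective hf).toAddMonoidHom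
      = (K.map f).addSubgroupOf f.range := by
    ext x
    simp only [AddSubgroup.mem_map, AddSubgroup.mem_addSubgroupOf]
    constructor
    · rintro ⟨k, hk, rfl⟩
      exact ⟨k, hk, AddMonoidHom.ofInjective_apply hf⟩
    · rintro ⟨k, hk, hfk⟩
      refine ⟨k, hk, Subtype.ext ?_⟩
      show ((AddMonoidHom.ofInjective hf) k : A) = (x : A)
      rw [AddMonoidHom.ofInjective_apply hf, hfk]
  exact ⟨(QuotientAddGroup.congr K _ (AddMonoidHom.ofInjective hf) he).symm⟩

noncomputable def chi1 : ℤ × ℤ →+ ZMod 3 :=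
  AddMonoidHom.mk' (fun p => ((p.2 - p.1 : ℤ) : ZMod 3)) (by
    intro p q; simp only [Prod.fst_add, Prod.snd_add]; push_cast; ring)

lemma chi1_surj : Function.Surjective chi1 := by
  intro z
  refine ⟨(0, (z.val : ℤ)), ?_⟩
  show (((z.val : ℤ) - 0 : ℤ) : ZMod 3) = z
  push_cast
  simp [ZMod.natCast_val, ZMod.cast_id]

open AddSubgroup in
lemma chi1_ker : chi1.ker = AddSubgroup.closure {((1 : ℤ), (1 : ℤ)), ((0 : ℤ), (3 : ℤ))} := by
  ext p
  rw [AddMonoidHom.mem_ker, AddSubgroup.mem_closure_pair]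
  constructor
  · intro h
    have h3 : (3 : ℤ) ∣ p.2 - p.1 := by
      rwa [show chi1 p = ((p.2 - p.1 : ℤ) : ZMod 3) from rfl,
        ZMod.intCast_zmod_eq_zero_iff_dvd] at h
    obtain ⟨n, hn⟩ := h3
    refine ⟨p.1, n, ?_⟩
    have h1 : p.1 • ((1 : ℤ), (1 : ℤ)) + n • ((0 : ℤ), (3 : ℤ)) = (p.1, p.1 + n * 3) := by
      simp [Prod.ext_iff, smul_eq_mul]
    rw [h1]
    ext <;> simp <;> omega
  · rintro ⟨m, n, rfl⟩
    show ((((m • ((1 : ℤ), (1 : ℤ)) + n • ((0 : ℤ), (3 : ℤ))).2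
      - (m • ((1 : ℤ), (1 : ℤ)) + n • ((0 : ℤ), (3 : ℤ))).1 : ℤ)) : ZMod 3) = 0
    rw [ZMod.intCast_zmod_eq_zero_iff_dvd]
    simp [smul_eq_mul]

noncomputable def chi2 : ℤ × ℤ →+ ZMod 3 :=
  AddMonoidHom.mk' (fun p => ((p.1 : ℤ) : ZMod 3)) (by
    intro p q; simp only [Prod.fst_add]; push_cast; ring)

lemma chi2_surj : Function.Surjective chi2 := by
  intro z
  refine ⟨((z.val : ℤ), 0), ?_⟩
  show (((z.val : ℤ) : ℤ) : ZMod 3) = z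
  push_cast
  simp [ZMod.natCast_val, ZMod.cast_id]

open AddSubgroup in
lemma chi2_ker : chi2.ker = AddSubgroup.closure {((3 : ℤ), (-1 : ℤ)), ((0 : ℤ), (1 : ℤ))} := by
  ext p
  rw [AddMonoidHom.mem_ker, AddSubgroup.mem_closure_pair]
  constructor
  · intro h
    have h3 : (3 : ℤ) ∣ p.1 := by
      rwa [show chi2 p = ((p.1 : ℤ) : ZMod 3) from rfl,
        ZMod.intCast_zmod_eq_zero_iff_dvd] at h
    obtain ⟨k, hk⟩ := h3
    refine ⟨k, p.2 + k, ?_⟩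
    have h1 : k • ((3 : ℤ), (-1 : ℤ)) + (p.2 + k) • ((0 : ℤ), (1 : ℤ))
        = (k * 3, -k + (p.2 + k)) := by
      simp [Prod.ext_iff, smul_eq_mul]
    rw [h1]
    ext <;> simp <;> omega
  · rintro ⟨m, n, rfl⟩
    show ((((m • ((3 : ℤ), (-1 : ℤ)) + n • ((0 : ℤ), (1 : ℤ))).1 : ℤ)) : ZMod 3) = 0
    rw [ZMod.intCast_zmod_eq_zero_iff_dvd]
    simp [smul_eq_mul]

open AddSubgroup in
lemma quotK1 :
    Nonempty (((ℤ × ℤ) ⧸ AddSubgroup.closure {((1 : ℤ), (1 : ℤ)), ((0 : ℤ), (3 : ℤ))}) ≃+ ZMod 3) := by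
  rw [← chi1_ker]
  exact ⟨QuotientAddGroup.quotientKerEquivOfSurjective chi1 chi1_surj⟩

open AddSubgroup in
lemma quotK2 :
    Nonempty (((ℤ × ℤ) ⧸ AddSubgroup.closure {((3 : ℤ), (-1 : ℤ)), ((0 : ℤ), (1 : ℤ))}) ≃+ ZMod 3) := by
  rw [← chi2_ker]
  exact ⟨QuotientAddGroup.quotientKerEquivOfSurjective chi2 chi2_surj⟩

lemma pow3_ne : ∀ m : ℕ, (3 : ℤ) ^ m ≠ 0 := fun m => pow_ne_zero m (by norm_num)

open AddSubgroup in
lemma quotient_even (m : ℕ) :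
    Nonempty ((↥(closure {(3 : ℤ) ^ m • E₁, (3 : ℤ) ^ m • E₂}) ⧸
      (closure {(3 : ℤ) ^ m • (E₁ + E₂), (3 * (3 : ℤ) ^ m) • E₂}).addSubgroupOf
        (closure {(3 : ℤ) ^ m • E₁, (3 : ℤ) ^ m • E₂})) ≃+ ZMod 3) := by
  set c : ℤ := (3 : ℤ) ^ m with hc
  set f := pairHom (c • E₁) (c • E₂) with hf
  have hinj : Function.Injective f := by
    rw [injective_iff_map_eq_zero]
    intro p hp
    rw [hf, pairHom_apply] at hp
    have h1 := DFunLike.congr_fun hp 1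
    have h2 := DFunLike.congr_fun hp 2
    simp [smul_eq_mul, mul_comm] at h1 h2
    have hp1 : p.1 = 0 := h1.resolve_right (pow3_ne m)
    have hp2 : p.2 = 0 := h2.resolve_right (pow3_ne m)
    ext <;> assumption
  have hmap : (AddSubgroup.closure {((1 : ℤ), (1 : ℤ)), ((0 : ℤ), (3 : ℤ))}).map f
      = closure {c • (E₁ + E₂), (3 * c) • E₂} := by
    rw [map_closure_pair]
    have g1 : f ((1 : ℤ), (1 : ℤ)) = c • (E₁ + E₂) := by
      rw [hf, pairHom_apply]; module
    have g2 : f ((0 : ℤ), (3 : ℤ)) = (3 * c) • E₂ := by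
      rw [hf, pairHom_apply]; module
    rw [g1, g2]
  rw [← pairHom_range (c • E₁) (c • E₂), ← hf, ← hmap]
  obtain ⟨q1⟩ := quot_transfer f hinj (AddSubgroup.closure {((1 : ℤ), (1 : ℤ)), ((0 : ℤ), (3 : ℤ))})
  obtain ⟨q2⟩ := quotK1
  exact ⟨q1.trans q2⟩

open AddSubgroup in
lemma quotient_odd (m : ℕ) :
    Nonempty ((↥(closure {(3 : ℤ) ^ m • (E₁ + E₂), (3 * (3 : ℤ) ^ m) • E₂}) ⧸
      (closure {(3 * (3 : ℤ) ^ m) • E₁, (3 * (3 : ℤ) ^ m) • E₂}).addSubgroupOf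
        (closure {(3 : ℤ) ^ m • (E₁ + E₂), (3 * (3 : ℤ) ^ m) • E₂})) ≃+ ZMod 3) := by
  set c : ℤ := (3 : ℤ) ^ m with hc
  set f := pairHom (c • (E₁ + E₂)) ((3 * c) • E₂) with hf
  have hinj : Function.Injective f := by
    rw [injective_iff_map_eq_zero]
    intro p hp
    rw [hf, pairHom_apply] at hp
    have h1 := DFunLike.congr_fun hp 1
    have h2 := DFunLike.congr_fun hp 2
    simp [smul_eq_mul] at h1 h2
    have hp1 : p.1 = 0 := h1.resolve_right (pow3_ne m)
    rw [hp1, zero_mul, zero_add] at h2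
    have hp2 : p.2 = 0 := by
      rcases mul_eq_zero.1 h2 with h | h
      · exact h
      · rcases mul_eq_zero.1 h with h' | h'
        · norm_num at h'
        · exact absurd h' (pow3_ne m)
    ext <;> assumption
  have hmap : (AddSubgroup.closure {((3 : ℤ), (-1 : ℤ)), ((0 : ℤ), (1 : ℤ))}).map f
      = closure {(3 * c) • E₁, (3 * c) • E₂} := by
    rw [map_closure_pair]
    have g1 : f ((3 : ℤ), (-1 : ℤ)) = (3 * c) • E₁ := by
      rw [hf, pairHom_apply]; module
    have g2 : f ((0 : ℤ), (1 : ℤ)) = (3 * c) • E₂ := by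
      rw [hf, pairHom_apply]; module
    rw [g1, g2]
  rw [← pairHom_range (c • (E₁ + E₂)) ((3 * c) • E₂), ← hf, ← hmap]
  obtain ⟨q1⟩ := quot_transfer f hinj (AddSubgroup.closure {((3 : ℤ), (-1 : ℤ)), ((0 : ℤ), (1 : ℤ))})
  obtain ⟨q2⟩ := quotK2
  exact ⟨q1.trans q2⟩

theorem stmt_15 :
    let e₁ : ZMod 3 →₀ ℤ := Finsupp.single 1 1 - Finsupp.single 0 1
    let e₂ : ZMod 3 →₀ ℤ := Finsupp.single 2 1 - Finsupp.single 0 1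
    ∀ j : ℕ,
      dPow (dihedralOp 3) (2 * j) =
        AddSubgroup.closure {(3 : ℤ) ^ j • e₁, (3 : ℤ) ^ j • e₂} ∧
      dPow (dihedralOp 3) (2 * j + 1) =
        AddSubgroup.closure {(3 : ℤ) ^ j • (e₁ + e₂), (3 : ℤ) ^ (j + 1) • e₂} ∧
      Nonempty
        ((↥(dPow (dihedralOp 3) j) ⧸
            (dPow (dihedralOp 3) (j + 1)).addSubgroupOf (dPow (dihedralOp 3) j)) ≃+
          ZMod 3) := by
  intro e₁ e₂ j
  have he1 : e₁ = E₁ := rfl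
  have he2 : e₂ = E₂ := rfl
  rw [he1, he2]
  refine ⟨(PQ j).1, ?_, ?_⟩
  · rw [show ((3 : ℤ) ^ (j + 1)) = 3 * 3 ^ j from by ring]
    exact (PQ j).2
  · rcases Nat.even_or_odd j with ⟨m, hm⟩ | ⟨m, hm⟩
    · have hj : j = 2 * m := by omega
      subst hj
      rw [(PQ m).1, (PQ m).2]
      exact quotient_even m
    · have hj : j = 2 * m + 1 := by omega
      subst hj
      rw [show (2 * m + 1 + 1 : ℕ) = 2 * (m + 1) from by ring, (PQ (m + 1)).1, (PQ m).2,
        show ((3 : ℤ) ^ (m + 1)) = 3 * 3 ^ m from by ring]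
      exact quotient_odd m
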